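/- arXiv:1912.02681 — 4 statements merged into one kernel-verified Lean document; each statement's English description precedes it below -/
import Mathlib

section
/- For all real λ with 0 ≤ λ < 1, all K ≥ 3λ + 1, and all X ∈ [0,1] with 2 - 3λX ≥ 0, one has ((1-2λX)²/(1-λX))·(1-X) + K(1-λX)·X ≥ 1. -/
/-!
Clearing the denominator `1 - λX` (positive, since `2 - 3λX ≥ 0`), the numerator of `F(X) - 1`
at `K = 3λ + 1` factors as `λ(1 - λ)X²(2 - 3λX)`; raising `K` adds `(K - 3λ - 1)(1 - λX)²X ≥ 0`.
-/

lemma boundary_sub_one_eq (l K X : ℝ) (hlX : 1 - l * X ≠ 0) :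
    (1 - 2 * l * X) ^ 2 / (1 - l * X) * (1 - X) + K * (1 - l * X) * X - 1
      = (l * (1 - l) * X ^ 2 * (2 - 3 * l * X) + (K - (3 * l + 1)) * (1 - l * X) ^ 2 * X)
        / (1 - l * X) := by
  field_simp
  ring

theorem stmt_0_general (l K X : ℝ) (hl0 : 0 ≤ l) (hl1 : l < 1)
    (hK : 3 * l + 1 ≤ K) (hX0 : 0 ≤ X)
    (h2 : 0 ≤ 2 - 3 * l * X) :
    1 ≤ (1 - 2 * l * X) ^ 2 / (1 - l * X) * (1 - X) + K * (1 - l * X) * X := by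
  have hlX : 0 < 1 - l * X := by linarith
  have hl : 0 ≤ l * (1 - l) := mul_nonneg hl0 (by linarith)
  have hK' : 0 ≤ K - (3 * l + 1) := by linarith
  rw [← sub_nonneg, boundary_sub_one_eq l K X hlX.ne']
  refine div_nonneg (add_nonneg ?_ ?_) hlX.le
  · exact mul_nonneg (mul_nonneg hl (sq_nonneg X)) h2
  · exact mul_nonneg (mul_nonneg hK' (sq_nonneg _)) hX0

theorem stmt_0 (l K X : ℝ) (hl0 : 0 ≤ l) (hl1 : l < 1)
    (hK : 3 * l + 1 ≤ K) (hX0 : 0 ≤ X) (hX1 : X ≤ 1)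
    (h2 : 0 ≤ 2 - 3 * l * X) :
    1 ≤ (1 - 2 * l * X) ^ 2 / (1 - l * X) * (1 - X) + K * (1 - l * X) * X :=
  stmt_0_general l K X hl0 hl1 hK hX0 h2
end

section
/- For all real λ < 0, all K ≥ 1/(1-λ), and all X ∈ [0,1], one has ((1-2λX)²/(1-λX))·(1-X) + K(1-λX)·X ≥ 1. -/
/-!
Both coefficients of `F` are bounded below in terms of `D = 1 - λX`: for `t = λX ≤ 0` one has
`(1 - 2t)² ≥ (1 - t)²`, so the first coefficient is at least `D`, and `K ≥ 1 / (1 - λ)`. The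
resulting lower bound `D (1 - X + X / (1 - λ))` exceeds `1` by `λ² X (1 - X) / (1 - λ) ≥ 0`.
-/

lemma one_sub_le_one_sub_two_mul_sq_div {t : ℝ} (ht : t ≤ 0) :
    1 - t ≤ (1 - 2 * t) ^ 2 / (1 - t) := by
  rw [le_div_iff₀ (by linarith)]
  nlinarith

lemma one_le_one_sub_mul_mul_add_div_mul {l X : ℝ} (hl : l < 1) (hX0 : 0 ≤ X) (hX1 : X ≤ 1) :
    1 ≤ (1 - l * X) * (1 - X) + 1 / (1 - l) * (1 - l * X) * X := by
  have hl' : 0 < 1 - l := by linarith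
  have hgap : (1 - l * X) * (1 - X) + 1 / (1 - l) * (1 - l * X) * X - 1
      = l ^ 2 * (X * (1 - X)) / (1 - l) := by
    field_simp
    ring
  have : 0 ≤ l ^ 2 * (X * (1 - X)) / (1 - l) := by
    have : 0 ≤ 1 - X := by linarith
    positivity
  linarith

theorem stmt_2 (l K X : ℝ) (hl : l < 0) (hK : 1 / (1 - l) ≤ K)
    (hX0 : 0 ≤ X) (hX1 : X ≤ 1) :
    1 ≤ (1 - 2 * l * X) ^ 2 / (1 - l * X) * (1 - X) + K * (1 - l * X) * X := by
  have hlX : l * X ≤ 0 := mul_nonpos_of_nonpos_of_nonneg hl.le hX0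
  have hD : 0 ≤ 1 - l * X := by linarith
  have hX1' : 0 ≤ 1 - X := by linarith
  calc 1 ≤ (1 - l * X) * (1 - X) + 1 / (1 - l) * (1 - l * X) * X :=
        one_le_one_sub_mul_mul_add_div_mul (by linarith) hX0 hX1
    _ ≤ (1 - 2 * l * X) ^ 2 / (1 - l * X) * (1 - X) + K * (1 - l * X) * X := by
      gcongr
      simpa only [mul_assoc] using one_sub_le_one_sub_two_mul_sq_div hlX
end

section
/- Let λ < 1 and K > 0. Suppose x, α : ℝ → ℝ are differentiable with x'(s) = cos α(s), sin α(s) ≠ 0, cos x(s) ≠ 0, 1 - 2λ sin²x(s) ≠ 0, and α'(s) = (tan x(s)/sin α(s))·[ ((1-λ sin²x(s))/(1-2λ sin²x(s)))·K - cos²α(s)·( (1-λ)/(1-λ sin²x(s)) + 4λcos²x(s)/(1-2λ sin²x(s)) ) ] for all s. Then the function E(s) = ((1-2λ sin²x(s))²/(1-λ sin²x(s)))·cos²x(s)·cos²α(s) + K(1-λ sin²x(s))·sin²x(s) is constant. -/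
/-!
In the variables `u = sin² x` and `v = cos² α` the energy reads
`E = f(u) v + K (1 - λu) u` with `f(u) = (1 - 2λu)² (1 - u) / (1 - λu)`, while `x' = cos α` gives
`u' = 2 sin x cos x cos α` and the equation for `α` says precisely
`f(u) v' = -u' (K (1 - 2λu) + v f'(u))`. Since `((1 - λu) u)' = (1 - 2λu) u'`, the product rule
gives `E' = 0`.
-/

open Real

theorem one_sub_mul_sin_sq_pos {l : ℝ} (hl : l < 1) (y : ℝ) : 0 < 1 - l * sin y ^ 2 := by
  rcases le_or_gt l 0 with h | h
  · nlinarith [sq_nonneg (sin y)]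
  · nlinarith [sin_sq_le_one y]

noncomputable def profileWeight (l u : ℝ) : ℝ :=
  (1 - 2 * l * u) ^ 2 * (1 - u) / (1 - l * u)

noncomputable def profileWeightDeriv (l u : ℝ) : ℝ :=
  -((1 - 2 * l * u) ^ 2 * (1 - l) / (1 - l * u) ^ 2
    + 4 * l * (1 - u) * (1 - 2 * l * u) / (1 - l * u))

noncomputable def profileAngleRHS (l K y a : ℝ) : ℝ :=
  tan y / sin a *
    ((1 - l * sin y ^ 2) / (1 - 2 * l * sin y ^ 2) * K
      - cos a ^ 2 * ((1 - l) / (1 - l * sin y ^ 2) + 4 * l * cos y ^ 2 / (1 - 2 * l * sin y ^ 2)))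

noncomputable def profileEnergy (l K y a : ℝ) : ℝ :=
  profileWeight l (sin y ^ 2) * cos a ^ 2 + K * (1 - l * sin y ^ 2) * sin y ^ 2

theorem hasDerivAt_profileWeight {l u : ℝ} (hu : 1 - l * u ≠ 0) :
    HasDerivAt (profileWeight l) (profileWeightDeriv l u) u := by
  have hid := hasDerivAt_id' u
  refine ((((hid.const_mul (2 * l)).const_sub 1).fun_pow 2).fun_mul (hid.const_sub 1)).fun_div
    ((hid.const_mul l).const_sub 1) hu |>.congr_deriv ?_
  rw [profileWeightDeriv]
  field_simp
  ring

theorem profileWeight_mul_angleRHS {l K y a : ℝ} (hp : 1 - l * sin y ^ 2 ≠ 0)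
    (hq : 1 - 2 * l * sin y ^ 2 ≠ 0) (hc : cos y ≠ 0) (hb : sin a ≠ 0) :
    profileWeight l (sin y ^ 2) * (-2 * cos a * sin a * profileAngleRHS l K y a) =
      -(2 * sin y * cos y * cos a) *
        (K * (1 - 2 * l * sin y ^ 2) + cos a ^ 2 * profileWeightDeriv l (sin y ^ 2)) := by
  simp only [profileWeight, profileWeightDeriv, profileAngleRHS, tan_eq_sin_div_cos, ← cos_sq']
  field_simp
  ring

theorem hasDerivAt_profileEnergy {l K : ℝ} {x α : ℝ → ℝ} {s : ℝ}
    (hx : HasDerivAt x (cos (α s)) s) (hα : HasDerivAt α (profileAngleRHS l K (x s) (α s)) s)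
    (hp : 1 - l * sin (x s) ^ 2 ≠ 0) (hq : 1 - 2 * l * sin (x s) ^ 2 ≠ 0) (hc : cos (x s) ≠ 0)
    (hb : sin (α s) ≠ 0) :
    HasDerivAt (fun t => profileEnergy l K (x t) (α t)) 0 s := by
  have hu := hx.sin.fun_pow 2
  have hv := hα.cos.fun_pow 2
  have hf := (hasDerivAt_profileWeight hp).comp s hu
  refine (hf.fun_mul hv).fun_add ((((hu.const_mul l).const_sub 1).const_mul K).fun_mul hu)
    |>.congr_deriv ?_
  simp only [Function.comp_apply, Nat.cast_ofNat]
  linear_combination profileWeight_mul_angleRHS (K := K) hp hq hc hb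

theorem stmt_9_general (l K : ℝ) (hl : l < 1)
    (x α : ℝ → ℝ)
    (hx : ∀ s, HasDerivAt x (Real.cos (α s)) s)
    (hsin : ∀ s, Real.sin (α s) ≠ 0)
    (hcos : ∀ s, Real.cos (x s) ≠ 0)
    (hden : ∀ s, 1 - 2 * l * Real.sin (x s) ^ 2 ≠ 0)
    (hα : ∀ s, HasDerivAt α
      (Real.tan (x s) / Real.sin (α s) *
        ((1 - l * Real.sin (x s) ^ 2) / (1 - 2 * l * Real.sin (x s) ^ 2) * K
          - Real.cos (α s) ^ 2 *
            ((1 - l) / (1 - l * Real.sin (x s) ^ 2)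
              + 4 * l * Real.cos (x s) ^ 2 / (1 - 2 * l * Real.sin (x s) ^ 2)))) s) :
    ∀ s t : ℝ,
      (1 - 2 * l * Real.sin (x s) ^ 2) ^ 2 / (1 - l * Real.sin (x s) ^ 2) *
          Real.cos (x s) ^ 2 * Real.cos (α s) ^ 2
        + K * (1 - l * Real.sin (x s) ^ 2) * Real.sin (x s) ^ 2 =
      (1 - 2 * l * Real.sin (x t) ^ 2) ^ 2 / (1 - l * Real.sin (x t) ^ 2) *
          Real.cos (x t) ^ 2 * Real.cos (α t) ^ 2
        + K * (1 - l * Real.sin (x t) ^ 2) * Real.sin (x t) ^ 2 := by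
  have hE (s : ℝ) : HasDerivAt (fun t => profileEnergy l K (x t) (α t)) 0 s :=
    hasDerivAt_profileEnergy (hx s) (hα s) (one_sub_mul_sin_sq_pos hl _).ne' (hden s) (hcos s)
      (hsin s)
  have hE_eq (s : ℝ) : profileEnergy l K (x s) (α s) =
      (1 - 2 * l * sin (x s) ^ 2) ^ 2 / (1 - l * sin (x s) ^ 2) * cos (x s) ^ 2 * cos (α s) ^ 2
        + K * (1 - l * sin (x s) ^ 2) * sin (x s) ^ 2 := by
    rw [profileEnergy, profileWeight, ← cos_sq']
    ring
  intro s t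
  rw [← hE_eq, ← hE_eq]
  exact is_const_of_deriv_eq_zero (fun y => (hE y).differentiableAt) (fun y => (hE y).deriv) s t

theorem stmt_9 (l K : ℝ) (hl : l < 1) (hK : 0 < K)
    (x α : ℝ → ℝ)
    (hx : ∀ s, HasDerivAt x (Real.cos (α s)) s)
    (hsin : ∀ s, Real.sin (α s) ≠ 0)
    (hcos : ∀ s, Real.cos (x s) ≠ 0)
    (hden : ∀ s, 1 - 2 * l * Real.sin (x s) ^ 2 ≠ 0)
    (hα : ∀ s, HasDerivAt α
      (Real.tan (x s) / Real.sin (α s) *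
        ((1 - l * Real.sin (x s) ^ 2) / (1 - 2 * l * Real.sin (x s) ^ 2) * K
          - Real.cos (α s) ^ 2 *
            ((1 - l) / (1 - l * Real.sin (x s) ^ 2)
              + 4 * l * Real.cos (x s) ^ 2 / (1 - 2 * l * Real.sin (x s) ^ 2)))) s) :
    ∀ s t : ℝ,
      (1 - 2 * l * Real.sin (x s) ^ 2) ^ 2 / (1 - l * Real.sin (x s) ^ 2) *
          Real.cos (x s) ^ 2 * Real.cos (α s) ^ 2
        + K * (1 - l * Real.sin (x s) ^ 2) * Real.sin (x s) ^ 2 =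
      (1 - 2 * l * Real.sin (x t) ^ 2) ^ 2 / (1 - l * Real.sin (x t) ^ 2) *
          Real.cos (x t) ^ 2 * Real.cos (α t) ^ 2
        + K * (1 - l * Real.sin (x t) ^ 2) * Real.sin (x t) ^ 2 :=
  stmt_9_general l K hl x α hx hsin hcos hden hα
end

section
/- Let λ < 1, λ ≠ 0, and suppose α₀, x₀ are real numbers with cos α₀ ≠ 0 such that for x(s) = (cos α₀)s + x₀ the function K(s) = (cos²α₀/(1-λ sin²x(s))²)·[4λ² sin⁴x(s) - 2λ(λ+3) sin²x(s) + 3λ + 1] is constant in s. Then cos α₀ = 0, a contradiction; i.e., there is no such solution: if cos α₀ ≠ 0 and λ ≠ 0, the function K(s) is non-constant. -/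
/-!
`K(s)` only depends on `sin x(s)`, and since `x` is a non-constant affine function, `sin x(s)`
takes both values `0` and `1`. Comparing `K` at these two values gives `l * (4 - 3 * l) = 0`,
impossible for `l < 1`, `l ≠ 0`.
-/

open Real

-- `K(s) = bergerK l (cos α₀) (sin (x s))`.
noncomputable def bergerK (l c σ : ℝ) : ℝ :=
  c ^ 2 / (1 - l * σ ^ 2) ^ 2 * (4 * l ^ 2 * σ ^ 4 - 2 * l * (l + 3) * σ ^ 2 + 3 * l + 1)

lemma bergerK_zero (l c : ℝ) : bergerK l c 0 = c ^ 2 * (3 * l + 1) := by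
  simp [bergerK]

lemma bergerK_one {l : ℝ} (hl : l ≠ 1) (c : ℝ) :
    bergerK l c 1 = c ^ 2 * (1 - 2 * l) / (1 - l) := by
  have hl' : 1 - l ≠ 0 := sub_ne_zero.mpr hl.symm
  unfold bergerK
  field_simp
  ring

lemma bergerK_zero_ne_one {l c : ℝ} (hl1 : l < 1) (hl0 : l ≠ 0) (hc : c ≠ 0) :
    bergerK l c 0 ≠ bergerK l c 1 := by
  rw [bergerK_zero, bergerK_one hl1.ne, Ne, eq_div_iff (by linarith)]
  intro h
  have hquad : c ^ 2 * (l * (4 - 3 * l)) = 0 := by linear_combination h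
  rcases mul_eq_zero.mp hquad with h | h
  · exact hc (pow_eq_zero_iff two_ne_zero |>.mp h)
  · rcases mul_eq_zero.mp h with h | h
    · exact hl0 h
    · linarith

lemma exists_mul_add_eq {c : ℝ} (hc : c ≠ 0) (x₀ y : ℝ) : ∃ s, c * s + x₀ = y :=
  ⟨(y - x₀) / c, by field_simp; ring⟩

theorem stmt_15 (l α₀ x₀ : ℝ) (hl1 : l < 1) (hl0 : l ≠ 0)
    (hα : Real.cos α₀ ≠ 0)
    (x : ℝ → ℝ) (hx : ∀ s, x s = Real.cos α₀ * s + x₀) :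
    ¬ ∀ s t : ℝ,
      Real.cos α₀ ^ 2 / (1 - l * Real.sin (x s) ^ 2) ^ 2 *
        (4 * l ^ 2 * Real.sin (x s) ^ 4 - 2 * l * (l + 3) * Real.sin (x s) ^ 2
          + 3 * l + 1) =
      Real.cos α₀ ^ 2 / (1 - l * Real.sin (x t) ^ 2) ^ 2 *
        (4 * l ^ 2 * Real.sin (x t) ^ 4 - 2 * l * (l + 3) * Real.sin (x t) ^ 2
          + 3 * l + 1) := by
  intro h
  obtain ⟨s, hs⟩ := exists_mul_add_eq hα x₀ 0
  obtain ⟨t, ht⟩ := exists_mul_add_eq hα x₀ (π / 2)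
  have hst : bergerK l (cos α₀) (sin (x s)) = bergerK l (cos α₀) (sin (x t)) :=
    h s t
  rw [hx, hx, hs, ht, sin_zero, sin_pi_div_two] at hst
  exact bergerK_zero_ne_one hl1 hl0 hα hst
end
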